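/- arXiv:1201.6528 — 3 statements merged into one kernel-verified Lean document; each statement's English description precedes it below -/
import Mathlib

section
/- Let α be a unit speed curve in E³ with κ > 0, τ nowhere zero, and define β(s) = α(s) + (as+b)T(s) + (cs+d)B(s) + λN(s). Then ⟨β'(s), N(s)⟩ = 0 for all s if and only if κ(s)/τ(s) = (cs+d)/(as+b) for all s (where as+b ≠ 0). -/
/-! By the Frenet equations, `β' = (1 + a - λκ) T + ((as+b)κ - (cs+d)τ) N + (c + λτ) B`, so
`⟨β', N⟩ = (as+b)κ - (cs+d)τ`, which vanishes exactly when `κ/τ = (cs+d)/(as+b)`. -/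

abbrev E3 := EuclideanSpace ℝ (Fin 3)

section FrenetCombination

variable {E : Type*} [NormedAddCommGroup E] [InnerProductSpace ℝ E]
  {α T N B : ℝ → E} {κ τ f g : ℝ → ℝ} {f' g' lam s : ℝ}

theorem hasDerivAt_frenet_combination (hα : HasDerivAt α (T s) s)
    (hT : HasDerivAt T (κ s • N s) s) (hN : HasDerivAt N (-(κ s) • T s + τ s • B s) s)
    (hB : HasDerivAt B (-(τ s) • N s) s) (hf : HasDerivAt f f' s) (hg : HasDerivAt g g' s) :
    HasDerivAt (fun x => α x + f x • T x + g x • B x + lam • N x)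
      ((1 + f' - lam * κ s) • T s + (f s * κ s - g s * τ s) • N s + (g' + lam * τ s) • B s) s := by
  refine (((hα.add (hf.smul hT)).add (hg.smul hB)).add (hN.const_smul lam)).congr_deriv ?_
  module

theorem inner_frame_combination_normal (hTN : inner ℝ (T s) (N s) = 0)
    (hNB : inner ℝ (N s) (B s) = 0) (hN : ‖N s‖ = 1) (x y z : ℝ) :
    inner ℝ (x • T s + y • N s + z • B s) (N s) = y := by
  rw [real_inner_comm (B s)] at hNB
  simp [inner_add_left, real_inner_smul_left, hTN, hNB, hN]

end FrenetCombination

theorem stmt_7_general (I : Set ℝ) (α T N B : ℝ → E3) (κ τ : ℝ → ℝ) (a b c d lam : ℝ)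
    (hα : ∀ s ∈ I, HasDerivAt α (T s) s)
    (hT : ∀ s ∈ I, HasDerivAt T (κ s • N s) s)
    (hN : ∀ s ∈ I, HasDerivAt N (-(κ s) • T s + τ s • B s) s)
    (hB : ∀ s ∈ I, HasDerivAt B (-(τ s) • N s) s)
    (hτne : ∀ s ∈ I, τ s ≠ 0)
    (hab : ∀ s ∈ I, a * s + b ≠ 0)
    (hNunit : ∀ s, ‖N s‖ = 1)
    (hTN : ∀ s, (inner ℝ (T s) (N s) : ℝ) = 0)
    (hNB : ∀ s, (inner ℝ (N s) (B s) : ℝ) = 0)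
    (β : ℝ → E3)
    (hβ : ∀ s, β s = α s + (a * s + b) • T s + (c * s + d) • B s + lam • N s) :
    (∀ s ∈ I, (inner ℝ (deriv β s) (N s) : ℝ) = 0) ↔
      (∀ s ∈ I, κ s / τ s = (c * s + d) / (a * s + b)) := by
  have hlin (p q : ℝ) (x : ℝ) : HasDerivAt (fun x => p * x + q) p x := by
    simpa using ((hasDerivAt_id x).const_mul p).add_const q
  refine forall₂_congr fun s hs => ?_
  rw [funext hβ, ((hasDerivAt_frenet_combination (hα s hs) (hT s hs) (hN s hs) (hB s hs)
      (hlin a b s) (hlin c d s)).deriv), inner_frame_combination_normal (hTN s) (hNB s) (hNunit s),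
    div_eq_div_iff (hτne s hs) (hab s hs), sub_eq_zero, mul_comm (a * s + b)]

/-- With `β(s) = α(s) + (as+b)T + (cs+d)B + λN` along a unit speed curve `α`
with `κ > 0` and `τ` nowhere zero and `as+b ≠ 0` on `I`:
`⟨β', N⟩ ≡ 0` on `I` (i.e. `β` and the tangent indicatrix are an
involute–evolute pair) iff `κ/τ = (cs+d)/(as+b)` on `I`. -/
theorem stmt_7 (I : Set ℝ) (α T N B : ℝ → E3) (κ τ : ℝ → ℝ) (a b c d lam : ℝ)
    (hα : ∀ s ∈ I, HasDerivAt α (T s) s)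
    (hT : ∀ s ∈ I, HasDerivAt T (κ s • N s) s)
    (hN : ∀ s ∈ I, HasDerivAt N (-(κ s) • T s + τ s • B s) s)
    (hB : ∀ s ∈ I, HasDerivAt B (-(τ s) • N s) s)
    (hκpos : ∀ s ∈ I, 0 < κ s) (hτne : ∀ s ∈ I, τ s ≠ 0)
    (hab : ∀ s ∈ I, a * s + b ≠ 0)
    (hTunit : ∀ s, ‖T s‖ = 1) (hNunit : ∀ s, ‖N s‖ = 1) (hBunit : ∀ s, ‖B s‖ = 1)
    (hTN : ∀ s, (inner ℝ (T s) (N s) : ℝ) = 0)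
    (hTB : ∀ s, (inner ℝ (T s) (B s) : ℝ) = 0)
    (hNB : ∀ s, (inner ℝ (N s) (B s) : ℝ) = 0)
    (β : ℝ → E3)
    (hβ : ∀ s, β s = α s + (a * s + b) • T s + (c * s + d) • B s + lam • N s) :
    (∀ s ∈ I, (inner ℝ (deriv β s) (N s) : ℝ) = 0) ↔
      (∀ s ∈ I, κ s / τ s = (c * s + d) / (a * s + b)) :=
  stmt_7_general I α T N B κ τ a b c d lam hα hT hN hB hτne hab hNunit hTN hNB β hβ
end

section
/- Let α be a unit speed curve in E³ with W(s) = τT + κB. If W'' is everywhere parallel to the principal normal N (i.e. W''(s) = λ(s)N(s) for some scalar function λ), then τ'' ≡ 0 and κ'' ≡ 0, so κ(s) = as + b and τ(s) = cs + d are linear functions of arc length; i.e., α is an Euler spiral in E³. -/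
open scoped RealInnerProductSpace

section

variable {F : Type*} [NormedAddCommGroup F] [NormedSpace ℝ F]

theorem eq_add_smul_of_hasDerivAt_of_hasDerivAt_zero {f f' : ℝ → F}
    (hf : ∀ x, HasDerivAt f (f' x) x) (hf' : ∀ x, HasDerivAt f' 0 x) (x : ℝ) :
    f x = f 0 + x • f' 0 := by
  have hconst : ∀ y, f' y = f' 0 := fun y =>
    is_const_of_deriv_eq_zero (fun z => (hf' z).differentiableAt) (fun z => (hf' z).deriv) y 0
  have hg : ∀ y, HasDerivAt (fun t => f t - t • f' 0) 0 y := fun y =>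
    ((hf y).sub ((hasDerivAt_id y).smul_const (f' 0))).congr_deriv (by
      rw [hconst y, one_smul, sub_self])
  have := is_const_of_deriv_eq_zero (fun y => (hg y).differentiableAt) (fun y => (hg y).deriv) x 0
  rw [zero_smul, sub_zero, sub_eq_iff_eq_add] at this
  rw [this, add_comm]

theorem hasDerivAt_smul_add_smul_of_frenet {T N B : ℝ → F} {p q : ℝ → ℝ} {p' q' κ τ s : ℝ}
    (hp : HasDerivAt p p' s) (hq : HasDerivAt q q' s)
    (hT : HasDerivAt T (κ • N s) s) (hB : HasDerivAt B (-τ • N s) s) :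
    HasDerivAt (fun t => p t • T t + q t • B t)
      (p' • T s + (p s * κ - q s * τ) • N s + q' • B s) s :=
  ((hp.smul hT).add (hq.smul hB)).congr_deriv (by module)

end

theorem coeffs_eq_zero_of_smul_add_smul_add_smul_eq_smul
    {F : Type*} [NormedAddCommGroup F] [InnerProductSpace ℝ F] {T N B : F}
    (hT : ‖T‖ = 1) (hB : ‖B‖ = 1) (hTN : ⟪T, N⟫ = 0) (hTB : ⟪T, B⟫ = 0) (hNB : ⟪N, B⟫ = 0)
    {a b c d : ℝ} (h : a • T + b • N + c • B = d • N) : a = 0 ∧ c = 0 := by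
  have hTT : ⟪T, T⟫ = 1 := by rw [real_inner_self_eq_norm_sq, hT, one_pow]
  have hBB : ⟪B, B⟫ = 1 := by rw [real_inner_self_eq_norm_sq, hB, one_pow]
  have hBT : ⟪B, T⟫ = 0 := by rw [real_inner_comm, hTB]
  have hBN : ⟪B, N⟫ = 0 := by rw [real_inner_comm, hNB]
  have hinT := congrArg (⟪T, ·⟫) h
  have hinB := congrArg (⟪B, ·⟫) h
  simp only [inner_add_right, real_inner_smul_right, hTT, hTN, hTB] at hinT
  simp only [inner_add_right, real_inner_smul_right, hBB, hBT, hBN] at hinB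
  constructor <;> linarith

theorem stmt_10_general (T N B : ℝ → E3) (κ τ κ' τ' κ'' τ'' l : ℝ → ℝ)
    (hT : ∀ s, HasDerivAt T (κ s • N s) s)
    (hB : ∀ s, HasDerivAt B (-(τ s) • N s) s)
    (hTunit : ∀ s, ‖T s‖ = 1) (hBunit : ∀ s, ‖B s‖ = 1)
    (hTN : ∀ s, (inner ℝ (T s) (N s) : ℝ) = 0)
    (hTB : ∀ s, (inner ℝ (T s) (B s) : ℝ) = 0)
    (hNB : ∀ s, (inner ℝ (N s) (B s) : ℝ) = 0)
    (hκ' : ∀ s, HasDerivAt κ (κ' s) s) (hτ' : ∀ s, HasDerivAt τ (τ' s) s)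
    (hκ'' : ∀ s, HasDerivAt κ' (κ'' s) s) (hτ'' : ∀ s, HasDerivAt τ' (τ'' s) s)
    (hWgeo : ∀ s, HasDerivAt (fun t => τ' t • T t + κ' t • B t) (l s • N s) s) :
    (∀ s, τ'' s = 0) ∧ (∀ s, κ'' s = 0) ∧
      ∃ a b c d : ℝ, (∀ s, κ s = a * s + b) ∧ (∀ s, τ s = c * s + d) := by
  have hcoeffs : ∀ s, τ'' s = 0 ∧ κ'' s = 0 := fun s =>
    coeffs_eq_zero_of_smul_add_smul_add_smul_eq_smul (hTunit s) (hBunit s) (hTN s) (hTB s)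
      (hNB s) ((hasDerivAt_smul_add_smul_of_frenet (hτ'' s) (hκ'' s) (hT s) (hB s)).unique
        (hWgeo s))
  have affine {f f' f'' : ℝ → ℝ} (hf : ∀ s, HasDerivAt f (f' s) s)
      (hf' : ∀ s, HasDerivAt f' (f'' s) s) (h0 : ∀ s, f'' s = 0) (s : ℝ) :
      f s = f' 0 * s + f 0 := by
    rw [eq_add_smul_of_hasDerivAt_of_hasDerivAt_zero hf (fun s => h0 s ▸ hf' s) s, smul_eq_mul]
    ring
  exact ⟨fun s => (hcoeffs s).1, fun s => (hcoeffs s).2, κ' 0, κ 0, τ' 0, τ 0,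
    affine hκ' hκ'' fun s => (hcoeffs s).2, affine hτ' hτ'' fun s => (hcoeffs s).1⟩

/-- If for `W = τT + κB` along a unit speed curve the second derivative `W''`
is everywhere parallel to the principal normal `N` (`W'' = λ(s)N(s)`), then
`τ'' ≡ 0` and `κ'' ≡ 0`, so `κ(s) = as + b` and `τ(s) = cs + d`:
the curve is an Euler spiral in `E³`. -/
theorem stmt_10 (α T N B : ℝ → E3) (κ τ κ' τ' κ'' τ'' l : ℝ → ℝ)
    (hα : ∀ s, HasDerivAt α (T s) s)
    (hT : ∀ s, HasDerivAt T (κ s • N s) s)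
    (hN : ∀ s, HasDerivAt N (-(κ s) • T s + τ s • B s) s)
    (hB : ∀ s, HasDerivAt B (-(τ s) • N s) s)
    (hκpos : ∀ s, 0 < κ s)
    (hTunit : ∀ s, ‖T s‖ = 1) (hNunit : ∀ s, ‖N s‖ = 1) (hBunit : ∀ s, ‖B s‖ = 1)
    (hTN : ∀ s, (inner ℝ (T s) (N s) : ℝ) = 0)
    (hTB : ∀ s, (inner ℝ (T s) (B s) : ℝ) = 0)
    (hNB : ∀ s, (inner ℝ (N s) (B s) : ℝ) = 0)
    (hnothelix : ¬ ∃ lam : ℝ, ∀ s, τ s = lam * κ s)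
    (hκ' : ∀ s, HasDerivAt κ (κ' s) s) (hτ' : ∀ s, HasDerivAt τ (τ' s) s)
    (hκ'' : ∀ s, HasDerivAt κ' (κ'' s) s) (hτ'' : ∀ s, HasDerivAt τ' (τ'' s) s)
    (W : ℝ → E3) (hW : ∀ s, W s = τ s • T s + κ s • B s)
    (hWgeo : ∀ s, HasDerivAt (fun t => τ' t • T t + κ' t • B t) (l s • N s) s) :
    (∀ s, τ'' s = 0) ∧ (∀ s, κ'' s = 0) ∧
      ∃ a b c d : ℝ, (∀ s, κ s = a * s + b) ∧ (∀ s, τ s = c * s + d) :=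
  stmt_10_general T N B κ τ κ' τ' κ'' τ'' l hT hB hTunit hBunit hTN hTB hNB hκ' hτ' hκ'' hτ'' hWgeo
end

section
/- Let α be a unit speed curve with κ > 0, τ nowhere zero, and β(s) = α(s) + (as+b)T + (cs+d)B + λN. The curve β is an involute-evolute partner of the binormal indicatrix (B) of α (whose unit tangent is −N) if and only if κ(s)(as+b) = τ(s)(cs+d) for all s, i.e. κ/τ = (cs+d)/(as+b). -/
section FrenetCombination

variable {E : Type*} [NormedAddCommGroup E] [InnerProductSpace ℝ E]

theorem inner_deriv_frenet_combination_normal {α T N B : ℝ → E} {κ τ f g : ℝ → ℝ}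
    {f' g' lam s : ℝ}
    (hα : HasDerivAt α (T s) s) (hT : HasDerivAt T (κ s • N s) s)
    (hN : HasDerivAt N (-(κ s) • T s + τ s • B s) s) (hB : HasDerivAt B (-(τ s) • N s) s)
    (hf : HasDerivAt f f' s) (hg : HasDerivAt g g' s)
    (hNunit : ‖N s‖ = 1) (hTN : inner ℝ (T s) (N s) = 0) (hNB : inner ℝ (N s) (B s) = 0) :
    inner ℝ (deriv (fun s => α s + f s • T s + g s • B s + lam • N s) s) (N s)
      = κ s * f s - τ s * g s := by
  have hNN : inner ℝ (N s) (N s) = (1 : ℝ) := by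
    rw [real_inner_self_eq_norm_sq, hNunit, one_pow]
  have hBN : inner ℝ (B s) (N s) = (0 : ℝ) := by
    rw [real_inner_comm, hNB]
  have hd : HasDerivAt (fun s => α s + f s • T s + g s • B s + lam • N s)
      (T s + (f s • κ s • N s + f' • T s) + (g s • -(τ s) • N s + g' • B s)
        + lam • (-(κ s) • T s + τ s • B s)) s :=
    ((hα.add (hf.smul hT)).add (hg.smul hB)).add (hN.const_smul lam)
  rw [hd.deriv]
  simp only [inner_add_left, real_inner_smul_left, hTN, hBN, hNN]
  ring

end FrenetCombination

theorem stmt_13_general (I : Set ℝ) (α T N B : ℝ → E3) (κ τ : ℝ → ℝ) (a b c d lam : ℝ)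
    (hα : ∀ s ∈ I, HasDerivAt α (T s) s)
    (hT : ∀ s ∈ I, HasDerivAt T (κ s • N s) s)
    (hN : ∀ s ∈ I, HasDerivAt N (-(κ s) • T s + τ s • B s) s)
    (hB : ∀ s ∈ I, HasDerivAt B (-(τ s) • N s) s)
    (hNunit : ∀ s, ‖N s‖ = 1)
    (hTN : ∀ s, (inner ℝ (T s) (N s) : ℝ) = 0)
    (hNB : ∀ s, (inner ℝ (N s) (B s) : ℝ) = 0)
    (β : ℝ → E3)
    (hβ : ∀ s, β s = α s + (a * s + b) • T s + (c * s + d) • B s + lam • N s) :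
    (∀ s ∈ I, (inner ℝ (deriv β s) (N s) : ℝ) = 0) ↔
      (∀ s ∈ I, κ s * (a * s + b) = τ s * (c * s + d)) := by
  have hlin (p q : ℝ) (s : ℝ) : HasDerivAt (fun s => p * s + q) p s := by
    simpa using ((hasDerivAt_id s).const_mul p).add_const q
  have key : ∀ s ∈ I, inner ℝ (deriv β s) (N s) = κ s * (a * s + b) - τ s * (c * s + d) :=
    fun s hs => by
      rw [funext hβ]
      exact inner_deriv_frenet_combination_normal (hα s hs) (hT s hs) (hN s hs) (hB s hs)
        (hlin a b s) (hlin c d s) (hNunit s) (hTN s) (hNB s)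
  refine forall₂_congr fun s hs => ?_
  rw [key s hs, sub_eq_zero]

/-- With `β(s) = α(s) + (as+b)T + (cs+d)B + λN` along a unit speed curve with
`κ > 0` and `τ` nowhere zero: `β` is an involute–evolute partner of the
binormal indicatrix (whose unit tangent is `−N`), i.e. `⟨β', N⟩ ≡ 0`, iff
`κ(s)(as+b) = τ(s)(cs+d)` for all `s` (i.e. `κ/τ = (cs+d)/(as+b)`). -/
theorem stmt_13 (I : Set ℝ) (α T N B : ℝ → E3) (κ τ : ℝ → ℝ) (a b c d lam : ℝ)
    (hα : ∀ s ∈ I, HasDerivAt α (T s) s)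
    (hT : ∀ s ∈ I, HasDerivAt T (κ s • N s) s)
    (hN : ∀ s ∈ I, HasDerivAt N (-(κ s) • T s + τ s • B s) s)
    (hB : ∀ s ∈ I, HasDerivAt B (-(τ s) • N s) s)
    (hκpos : ∀ s ∈ I, 0 < κ s) (hτne : ∀ s ∈ I, τ s ≠ 0)
    (hTunit : ∀ s, ‖T s‖ = 1) (hNunit : ∀ s, ‖N s‖ = 1) (hBunit : ∀ s, ‖B s‖ = 1)
    (hTN : ∀ s, (inner ℝ (T s) (N s) : ℝ) = 0)
    (hTB : ∀ s, (inner ℝ (T s) (B s) : ℝ) = 0)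
    (hNB : ∀ s, (inner ℝ (N s) (B s) : ℝ) = 0)
    (β : ℝ → E3)
    (hβ : ∀ s, β s = α s + (a * s + b) • T s + (c * s + d) • B s + lam • N s) :
    (∀ s ∈ I, (inner ℝ (deriv β s) (N s) : ℝ) = 0) ↔
      (∀ s ∈ I, κ s * (a * s + b) = τ s * (c * s + d)) :=
  stmt_13_general I α T N B κ τ a b c d lam hα hT hN hB hNunit hTN hNB β hβ
end
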